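/- If B ⊆ ℕ contains two consecutive positive naturals q-1 and q, then the function S(x,y) = xy + y - yq + 1 (which has multiplicative structure) makes ⟨B,S⟩ an ℕ-Induction Model. -/
import Mathlib


/-- Cumulative closure `Cl_i(⟨B,S⟩)` for a binary generating function. -/
def clos2 (S : ℕ+ → ℕ+ → ℤ) (B : Set ℕ+) : ℕ → Set ℕ+
  | 0 => B
  | i + 1 => clos2 S B i ∪
      {n : ℕ+ | ∃ x ∈ clos2 S B i, ∃ y ∈ clos2 S B i, S x y = (n : ℤ)}

/-- `Sⁱ(B)` for a binary generating function. -/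
def spow2 (S : ℕ+ → ℕ+ → ℤ) (B : Set ℕ+) : ℕ → Set ℕ+
  | 0 => B
  | i + 1 => {n : ℕ+ | ∃ x ∈ clos2 S B i, ∃ y ∈ clos2 S B i, S x y = (n : ℤ)}

lemma clos2_mono (S : ℕ+ → ℕ+ → ℤ) (B : Set ℕ+) {i j : ℕ} (h : i ≤ j) :
    clos2 S B i ⊆ clos2 S B j := by
  induction j with
  | zero => simp_all
  | succ j ih =>
    rcases Nat.lt_or_ge i (j+1) with h' | h'
    · exact (ih (Nat.lt_succ_iff.mp h')).trans (Set.subset_union_left)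
    · have : i = j + 1 := le_antisymm h h'
      subst this; rfl

lemma clos2_subset_union (S : ℕ+ → ℕ+ → ℤ) (B : Set ℕ+) (i : ℕ) :
    clos2 S B i ⊆ ⋃ k, spow2 S B k := by
  induction i with
  | zero => exact Set.subset_iUnion (spow2 S B) 0
  | succ i ih =>
    intro n hn
    rcases hn with h | h
    · exact ih h
    · exact Set.mem_iUnion.mpr ⟨i + 1, h⟩

/-- If `B` contains two consecutive positive naturals `q - 1` and `q`, then
`S(x,y) = xy + y - yq + 1` (which has multiplicative structure) makes `⟨B,S⟩` an
ℕ-Induction Model. -/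
theorem multiplicative_consecutive_induction_model (B : Set ℕ+) (q : ℕ+) (hq1 : 1 < q)
    (hqm : q - 1 ∈ B) (hq : q ∈ B) :
    (⋃ i, spow2 (fun x y => (x : ℤ) * y + y - y * q + 1) B i) = Set.univ := by
  set S : ℕ+ → ℕ+ → ℤ := fun x y => (x : ℤ) * y + y - y * q + 1 with hS
  have hcast : ((q - 1 : ℕ+) : ℤ) = (q : ℤ) - 1 := by
    have : ((q - 1 : ℕ+) : ℕ) = (q : ℕ) - 1 := PNat.sub_coe q 1 ▸ (by simp [hq1])
    have h1 : (1 : ℕ) ≤ (q : ℕ) := q.one_le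
    push_cast [this]
    omega
  have key : ∀ k : ℕ, ∀ n : ℕ+, (n : ℕ) = k + 1 → n ∈ clos2 S B (k + 1) := by
    intro k
    induction k with
    | zero =>
      intro n hn
      refine Or.inr ⟨q - 1, hqm, q - 1, hqm, ?_⟩
      have : ((n:ℕ) : ℤ) = 1 := by omega
      rw [hS]; simp only []
      rw [hcast, this]; ring
    | succ k ih =>
      intro n hn
      have hm : ∃ m : ℕ+, (m : ℕ) = k + 1 := ⟨⟨k+1, Nat.succ_pos k⟩, rfl⟩
      obtain ⟨m, hmk⟩ := hm
      have hmem := ih m hmk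
      refine Or.inr ⟨q, clos2_mono S B (Nat.zero_le _) hq, m, hmem, ?_⟩
      rw [hS]; simp only []
      have : (n : ℤ) = (m : ℤ) + 1 := by
        have : (n : ℕ) = (m : ℕ) + 1 := by omega
        exact_mod_cast congrArg (Nat.cast (R := ℤ)) this
      rw [this]; ring
  ext n
  simp only [Set.mem_univ, iff_true]
  have hn : (n : ℕ) = ((n : ℕ) - 1) + 1 := by
    have := n.pos; omega
  exact clos2_subset_union S B _ (key ((n : ℕ) - 1) n hn)
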